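/- If H ⊆ Q*_λ is linked and big, then fil(H) is an ultrafilter on λ. -/

import Mathlib

/-!
Bigness lets a single `q ∈ H` decide a set `A ⊆ λ` uniformly on all its members, which puts
`A` or `λ ∖ A` into `fil(H)`. Linkedness gives `fil(H)` the finite intersection property: for
`p ∈ Q*_λ` every `A ∈ fil(p)` (above level `ε`) is eventually in the ultrafilters of `Σ(p)`,
because by regularity the members of `p` below `ε` live below some `β < λ`, so a triple of
`Σ(p)` above `β` only sees members of `p` above `ε`. A triple in `Σ(p₀) ∩ ⋯ ∩ Σ(pₙ)` above all
the relevant `β`s then has `A₀ ∩ ⋯ ∩ Aₙ` in its ultrafilter.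
-/

namespace RS889

noncomputable section

open Cardinal Set

universe u v

/-- `F` is a (proper) filter on the set `Z`, presented as the family of its members. -/
def IsFilterOn {α : Type u} (F : Set (Set α)) (Z : Set α) : Prop :=
  (∀ A ∈ F, A ⊆ Z) ∧ Z ∈ F ∧
    (∀ A ∈ F, ∀ B, A ⊆ B → B ⊆ Z → B ∈ F) ∧
    (∀ A ∈ F, ∀ B ∈ F, A ∩ B ∈ F) ∧ ∅ ∉ F

/-- The family `F⁺` of `F`-positive subsets of `Z`. -/
def posOf {α : Type u} (F : Set (Set α)) (Z : Set α) : Set (Set α) :=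
  {B | B ⊆ Z ∧ ∀ C ∈ F, (B ∩ C).Nonempty}

/-- `F` is an ultrafilter on the set `Z`. -/
def IsUltraOn {α : Type u} (F : Set (Set α)) (Z : Set α) : Prop :=
  IsFilterOn F Z ∧ ∀ A ⊆ Z, A ∈ F ∨ Z \ A ∈ F

/-- An unultra filter: every positive set splits into two positive pieces. -/
def Unultra {α : Type u} (F : Set (Set α)) (Z : Set α) : Prop :=
  ∀ A ∈ posOf F Z, ∃ B ⊆ A, B ∈ posOf F Z ∧ A \ B ∈ posOf F Z

/-- The sum `⊕^E_{x ∈ X} Fx x` of the filters `Fx x` on the sets `Z x` over a filter `E` on `X`. -/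
def filSum {α : Type u} {β : Type v} (X : Set α) (E : Set (Set α))
    (Z : α → Set β) (Fx : α → Set (Set β)) : Set (Set β) :=
  {A | A ⊆ (⋃ x ∈ X, Z x) ∧ {x | x ∈ X ∧ Z x ∩ A ∈ Fx x} ∈ E}

/-- The sum `⊕_{ζ<ξ} F ζ` over the filter of co-bounded subsets of `ξ`. -/
def cobddSum {α : Type u} (ξ : Ordinal.{0}) (Z : Ordinal.{0} → Set α)
    (F : Ordinal.{0} → Set (Set α)) : Set (Set α) :=
  {A | A ⊆ (⋃ ζ ∈ Set.Iio ξ, Z ζ) ∧ ∃ β < ξ, ∀ ζ, β ≤ ζ → ζ < ξ → Z ζ ∩ A ∈ F ζ}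

/-- A triple `(α, Z, F)`: an ordinal, a set of ordinals and a family of subsets of `Z`
(intended to be a filter on `Z`). -/
structure LocalFilter : Type 1 where
  a : Ordinal.{0}
  Z : Set Ordinal.{0}
  F : Set (Set Ordinal.{0})

/-- A system of local filters on `lam`. -/
def IsLFS (lam : Cardinal.{0}) (S : Set LocalFilter) : Prop :=
  (∀ t ∈ S, t.Z ⊆ Set.Iio lam.ord ∧ #t.Z < Cardinal.lift.{1} lam ∧
      IsLeast t.Z t.a ∧ IsFilterOn t.F t.Z) ∧
    ∀ β < lam.ord, ∃ t ∈ S, β ≤ t.a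

/-- The family `Q*_lam(S)`. -/
def Qstar (lam : Cardinal.{0}) (S : Set LocalFilter) : Set (Set LocalFilter) :=
  {r | r ⊆ S ∧ #r = Cardinal.lift.{1} lam ∧
    ∀ ξ : Ordinal.{0}, #{t | t ∈ r ∧ t.a = ξ} < Cardinal.lift.{1} lam}

/-- The filter `fil(r)` on `lam` generated by `r`. -/
def fil (lam : Cardinal.{0}) (r : Set LocalFilter) : Set (Set Ordinal.{0}) :=
  {A | A ⊆ Set.Iio lam.ord ∧ ∃ ε < lam.ord, ∀ t ∈ r, ε ≤ t.a → A ∩ t.Z ∈ t.F}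

/-- `r` is strongly disjoint. -/
def StronglyDisjoint (r : Set LocalFilter) : Prop :=
  (∀ s ∈ r, ∀ t ∈ r, s.a = t.a → s = t) ∧
    ∀ s ∈ r, ∀ t ∈ r, s.a < t.a → s.Z ⊆ Set.Iio t.a

/-- The family `Q⁰_lam(S)` of strongly disjoint members of `Q*_lam(S)`. -/
def Qzero (lam : Cardinal.{0}) (S : Set LocalFilter) : Set (Set LocalFilter) :=
  {r | r ∈ Qstar lam S ∧ StronglyDisjoint r}

/-- `fil(H) = ⋃ { fil(r) : r ∈ H }`. -/
def filH (lam : Cardinal.{0}) (H : Set (Set LocalFilter)) : Set (Set Ordinal.{0}) :=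
  {A | ∃ r ∈ H, A ∈ fil lam r}

/-- A uniform family of subsets of `lam`: every member has cardinality `lam`. -/
def IsUniform (lam : Cardinal.{0}) (D : Set (Set Ordinal.{0})) : Prop :=
  ∀ A ∈ D, #A = Cardinal.lift.{1} lam

/-- `C` is a club (closed unbounded) subset of `lam`. -/
def IsClub (lam : Cardinal.{0}) (C : Set Ordinal.{0}) : Prop :=
  C ⊆ Set.Iio lam.ord ∧ (∀ β < lam.ord, ∃ γ ∈ C, β < γ) ∧
    ∀ δ, δ < lam.ord → δ ≠ 0 → (∀ β < δ, ∃ γ ∈ C, β < γ ∧ γ < δ) → δ ∈ C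

/-- `St` is stationary in `lam`. -/
def IsStationary (lam : Cardinal.{0}) (St : Set Ordinal.{0}) : Prop :=
  ∀ C, IsClub lam C → (St ∩ C).Nonempty

/-- `D` is a weakly reasonable (ultra)filter on `lam`. -/
def WeaklyReasonable (lam : Cardinal.{0}) (D : Set (Set Ordinal.{0})) : Prop :=
  ∀ f : Ordinal.{0} → Ordinal.{0},
    (∀ δ < lam.ord, f δ < lam.ord) →
    (∀ δ δ', δ ≤ δ' → δ' < lam.ord → f δ ≤ f δ') →
    (∀ β < lam.ord, ∃ δ < lam.ord, β ≤ f δ) →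
    ∃ C, IsClub lam C ∧ (⋃ δ ∈ C, Set.Ico δ (δ + f δ)) ∉ D

/-- `e` is the increasing enumeration of `C ∪ {0}` (in order type `lam`). -/
def IsEnum (lam : Cardinal.{0}) (C : Set Ordinal.{0}) (e : Ordinal.{0} → Ordinal.{0}) : Prop :=
  (∀ ξ η, ξ < η → η < lam.ord → e ξ < e η) ∧
    (∀ ξ < lam.ord, e ξ ∈ insert 0 C) ∧
    ∀ γ ∈ insert 0 C, ∃ ξ < lam.ord, e ξ = γ

/-- The quotient `D/C`, where `e` is the increasing enumeration of `C ∪ {0}`. -/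
def quotFil (lam : Cardinal.{0}) (D : Set (Set Ordinal.{0})) (e : Ordinal.{0} → Ordinal.{0}) :
    Set (Set Ordinal.{0}) :=
  {A | A ⊆ Set.Iio lam.ord ∧ (⋃ ξ ∈ A, Set.Ico (e ξ) (e (ξ + 1))) ∈ D}

/-- `d` is an increasing continuous sequence of ordinals below `lam` (indexed by `ξ < lam`). -/
def IncrCont (lam : Cardinal.{0}) (d : Ordinal.{0} → Ordinal.{0}) : Prop :=
  (∀ ξ < lam.ord, d ξ < lam.ord) ∧
    (∀ ξ η, ξ < η → η < lam.ord → d ξ < d η) ∧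
    ∀ δ, δ < lam.ord → Order.IsSuccLimit δ → ∀ β < d δ, ∃ ξ < δ, β ≤ d ξ

/-- The full system `𝓕^ult` of local non-principal ultrafilters on `lam`. -/
def Fult (lam : Cardinal.{0}) : Set LocalFilter :=
  {t | t.a < lam.ord ∧ t.a ∈ t.Z ∧ t.Z ⊆ {o | t.a ≤ o ∧ o < lam.ord} ∧
      t.Z.Infinite ∧ #t.Z < Cardinal.lift.{1} lam ∧ IsUltraOn t.F t.Z ∧
      ∀ x : Ordinal.{0}, ({x} : Set Ordinal.{0}) ∉ t.F}

/-- `Σ(p)`. -/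
def SigmaP (lam : Cardinal.{0}) (p : Set LocalFilter) : Set LocalFilter :=
  {t | t ∈ Fult lam ∧ ∀ A ∈ t.F, ∃ s ∈ p, A ∩ s.Z ∈ s.F}

/-- A linked family `H ⊆ Q*_lam`. -/
def Linked (lam : Cardinal.{0}) (H : Set (Set LocalFilter)) : Prop :=
  H.Nonempty ∧ ∀ S : Set (Set LocalFilter), S ⊆ H → S.Finite → S.Nonempty →
    #{α : Ordinal.{0} | ∃ t : LocalFilter, t.a = α ∧ ∀ p ∈ S, t ∈ SigmaP lam p} =
      Cardinal.lift.{1} lam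

/-- A big family `H ⊆ Q*_lam`. -/
def Big (lam : Cardinal.{0}) (H : Set (Set LocalFilter)) : Prop :=
  H.Nonempty ∧ ∀ D ⊆ Fult lam, ∃ q ∈ H, q ⊆ D ∨ q ∩ D = ∅

/-- The condition `(⊕)^sum_S`. -/
def SumCond (lam : Cardinal.{0}) (S : Set LocalFilter) : Prop :=
  ∀ κ : Cardinal.{0}, ℵ₀ ≤ κ → κ < lam →
    ∀ t : Ordinal.{0} → LocalFilter,
      (∀ ξ < κ.ord, t ξ ∈ S) →
      (∀ ξ ζ, ξ < ζ → ζ < κ.ord → (t ξ).Z ⊆ Set.Iio (t ζ).a) →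
      ∃ E : Set (Set Ordinal.{0}), IsFilterOn E (Set.Iio κ.ord) ∧
        (∀ A ∈ E, #A = Cardinal.lift.{1} κ) ∧
        (LocalFilter.mk (t 0).a (⋃ ξ ∈ Set.Iio κ.ord, (t ξ).Z)
          (filSum (Set.Iio κ.ord) E (fun ξ => (t ξ).Z) (fun ξ => (t ξ).F))) ∈ S

/-- `(<lam⁺)`-completeness of a subfamily `Q` of `Q*` with respect to `≤*`. -/
def Complete (lam : Cardinal.{0}) (Q : Set (Set LocalFilter)) : Prop :=
  ∀ γ : Ordinal.{0}, γ.card ≤ lam →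
    ∀ p : Ordinal.{0} → Set LocalFilter,
      (∀ ξ < γ, p ξ ∈ Q) →
      (∀ ξ ζ, ξ ≤ ζ → ζ < γ → fil lam (p ξ) ⊆ fil lam (p ζ)) →
      ∃ q ∈ Q, ∀ ξ < γ, fil lam (p ξ) ⊆ fil lam q

/-- The full system `𝓕₀` of co-bounded filters on `lam`. -/
def Fcobdd (lam : Cardinal.{0}) : Set LocalFilter :=
  {t | t.a ∈ t.Z ∧ t.Z ⊆ {o | t.a ≤ o ∧ o < lam.ord} ∧
      #t.Z < Cardinal.lift.{1} lam ∧ sSup t.Z ∉ t.Z ∧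
      t.F = {A | A ⊆ t.Z ∧ ∃ β < sSup t.Z, ∀ x ∈ t.Z, β ≤ x → x ∈ A}}

/-- The `Ē`-closure of a system `S` of local filters (as an inductive family:
it is closed under `E κ`-sums of `κ`-sequences of previously obtained triples). -/
inductive EClos (lam : Cardinal.{0}) (E : Cardinal.{0} → Set (Set Ordinal.{0}))
    (S : Set LocalFilter) : LocalFilter → Prop
  | base : ∀ t ∈ S, EClos lam E S t
  | sum : ∀ κ : Cardinal.{0}, ℵ₀ ≤ κ → κ < lam →
      ∀ t : Ordinal.{0} → LocalFilter,
        (∀ ξ < κ.ord, EClos lam E S (t ξ)) →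
        (∀ ξ ζ, ξ < ζ → ζ < κ.ord → (t ξ).Z ⊆ Set.Iio (t ζ).a) →
        EClos lam E S (LocalFilter.mk (t 0).a (⋃ ξ ∈ Set.Iio κ.ord, (t ξ).Z)
          (filSum (Set.Iio κ.ord) (E κ) (fun ξ => (t ξ).Z) (fun ξ => (t ξ).F)))

/-- The full system `𝓕^unu` of local unultra filters on `lam`. -/
def Funu (lam : Cardinal.{0}) : Set LocalFilter :=
  {t | t.Z.Nonempty ∧ t.Z ⊆ Set.Iio lam.ord ∧ #t.Z < Cardinal.lift.{1} lam ∧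
      IsLeast t.Z t.a ∧ IsFilterOn t.F t.Z ∧ Unultra t.F t.Z}

/-- A pararegularity system for `F` (on `Z`), indexed by finite subsets of `κ`. -/
def PRSystem (κ : Cardinal.{0}) (F : Set (Set Ordinal.{0})) (Z : Set Ordinal.{0}) : Prop :=
  ∃ A : Finset Ordinal.{0} → Set Ordinal.{0},
    (∀ u : Finset Ordinal.{0}, ↑u ⊆ Set.Iio κ.ord → A u ∈ F) ∧
    (∀ u v : Finset Ordinal.{0}, ↑v ⊆ Set.Iio κ.ord → u ⊆ v → A v ⊆ A u) ∧
    (∀ U : Set Ordinal.{0}, U ⊆ Set.Iio κ.ord → U.Infinite →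
      (⋂ ξ ∈ U, A {ξ}) = ∅) ∧
    F = {B | B ⊆ Z ∧ ∃ u : Finset Ordinal.{0}, ↑u ⊆ Set.Iio κ.ord ∧ A u ⊆ B}

/-- `F` is a pararegular filter on `Z` (with `α = min Z`). -/
def Pararegular (lam : Cardinal.{0}) (F : Set (Set Ordinal.{0})) (Z : Set Ordinal.{0})
    (α : Ordinal.{0}) : Prop :=
  ∃ κ : Cardinal.{0}, (Ordinal.omega0 + α).card ≤ κ ∧ κ < lam ∧ PRSystem κ F Z

/-- `F` is a strongly pararegular filter on `Z` (with `α = min Z`). -/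
def StronglyPararegular (lam : Cardinal.{0}) (F : Set (Set Ordinal.{0})) (Z : Set Ordinal.{0})
    (α : Ordinal.{0}) : Prop :=
  ∃ κ : Cardinal.{0}, 2 ^ (Ordinal.omega0 + α).card ≤ κ ∧ κ < lam ∧ PRSystem κ F Z

/-- The full system `𝓕^pr` of local pararegular filters on `lam`. -/
def Fpr (lam : Cardinal.{0}) : Set LocalFilter :=
  {t | t.Z.Infinite ∧ t.Z ⊆ Set.Iio lam.ord ∧ #t.Z < Cardinal.lift.{1} lam ∧
      IsLeast t.Z t.a ∧ IsFilterOn t.F t.Z ∧ Pararegular lam t.F t.Z t.a}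

/-- The full system `𝓕^spr` of local strongly pararegular filters on `lam`. -/
def Fspr (lam : Cardinal.{0}) : Set LocalFilter :=
  {t | t.Z.Infinite ∧ t.Z ⊆ Set.Iio lam.ord ∧ #t.Z < Cardinal.lift.{1} lam ∧
      IsLeast t.Z t.a ∧ IsFilterOn t.F t.Z ∧ StronglyPararegular lam t.F t.Z t.a}

/-- The space `^lam lam`. -/
def Fn (lam : Cardinal.{0}) : Type 1 := ↥(Set.Iio lam.ord) → ↥(Set.Iio lam.ord)

/-- The basic open set `O_s` determined by a partial function `s` of length `γ`. -/
def basicOpen (lam : Cardinal.{0}) (γ : Ordinal.{0}) (s : Ordinal.{0} → Ordinal.{0}) : Set (Fn lam) :=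
  {f | ∀ ξ : ↥(Set.Iio lam.ord), (ξ : Ordinal.{0}) < γ → ((f ξ : Ordinal.{0}) = s ξ)}

/-- `X ⊆ ^lam lam` is nowhere dense. -/
def NwDense (lam : Cardinal.{0}) (X : Set (Fn lam)) : Prop :=
  ∀ γ < lam.ord, ∀ s : Ordinal.{0} → Ordinal.{0}, (∀ ξ < γ, s ξ < lam.ord) →
    ∃ γ', γ ≤ γ' ∧ γ' < lam.ord ∧ ∃ s' : Ordinal.{0} → Ordinal.{0},
      (∀ ξ < γ', s' ξ < lam.ord) ∧ (∀ ξ < γ, s' ξ = s ξ) ∧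
      basicOpen lam γ' s' ∩ X = ∅

/-- `X` belongs to the ideal `M^lam_{lam,lam}`: it is covered by `lam` many
nowhere dense sets. -/
def MeagerSet (lam : Cardinal.{0}) (X : Set (Fn lam)) : Prop :=
  ∃ A : Ordinal.{0} → Set (Fn lam), (∀ ξ < lam.ord, NwDense lam (A ξ)) ∧
    X ⊆ ⋃ ξ ∈ Set.Iio lam.ord, A ξ

/-- `cov(M^lam_{lam,lam})`. -/
def covM (lam : Cardinal.{0}) : Cardinal.{1} :=
  sInf {c | ∃ 𝓐 : Set (Set (Fn lam)), (∀ X ∈ 𝓐, MeagerSet lam X) ∧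
    ⋃₀ 𝓐 = Set.univ ∧ #𝓐 = c}

/-- Nodes of trees of sequences of ordinals: a pair (level, function). -/
abbrev TNode : Type 1 := Ordinal.{0} × (Ordinal.{0} → Ordinal.{0})

/-- Truncation of a function below `γ` (with value `0` elsewhere). -/
def truncF (γ : Ordinal.{0}) (f : Ordinal.{0} → Ordinal.{0}) : Ordinal.{0} → Ordinal.{0} :=
  fun ξ => if ξ < γ then f ξ else 0

/-- `T` is a tree of height `lam` of (normalized) sequences of ordinals `< lam`. -/
def IsTree (lam : Cardinal.{0}) (T : Set TNode) : Prop :=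
  (∀ x ∈ T, x.1 < lam.ord ∧ (∀ ξ < x.1, x.2 ξ < lam.ord) ∧ x.2 = truncF x.1 x.2) ∧
    ∀ x ∈ T, ∀ γ ≤ x.1, (γ, truncF γ x.2) ∈ T

/-- The `γ`-th level of `T`. -/
def treeLevel (T : Set TNode) (γ : Ordinal.{0}) : Set TNode := {x | x ∈ T ∧ x.1 = γ}

/-- `T` is a `lam`-Kurepa tree: a tree of height `lam` all of whose levels are
nonempty of cardinality `< lam`. -/
def IsKurepaTree (lam : Cardinal.{0}) (T : Set TNode) : Prop :=
  IsTree lam T ∧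
    ∀ γ < lam.ord, (treeLevel T γ).Nonempty ∧
      #(treeLevel T γ) < Cardinal.lift.{1} lam

/-- The set of `lam`-branches of `T` (normalized functions all of whose proper
initial segments lie in `T`). -/
def branches (lam : Cardinal.{0}) (T : Set TNode) : Set (Ordinal.{0} → Ordinal.{0}) :=
  {f | f = truncF lam.ord f ∧ ∀ γ < lam.ord, (γ, truncF γ f) ∈ T}

namespace IsFilterOn

variable {α : Type u} {F : Set (Set α)} {Z X Y : Set α}

lemma nonempty_of_mem (hF : IsFilterOn F Z) (hX : X ∈ F) : X.Nonempty :=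
  nonempty_iff_ne_empty.2 fun h => hF.2.2.2.2 (h ▸ hX)

lemma inter_nonempty (hF : IsFilterOn F Z) (hX : X ∈ F) (hY : Y ∈ F) : (X ∩ Y).Nonempty :=
  hF.nonempty_of_mem (hF.2.2.2.1 X hX Y hY)

lemma sInter_inter_mem (hF : IsFilterOn F Z) {S : Set (Set α)} (hS : S.Finite)
    (h : ∀ B ∈ S, B ∩ Z ∈ F) : ⋂₀ S ∩ Z ∈ F := by
  induction S, hS using Set.Finite.induction_on with
  | empty => simpa using hF.2.1
  | @insert B S _ _ ih =>
    rw [sInter_insert, inter_inter_distrib_right]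
    exact hF.2.2.2.1 _ (h B (mem_insert B S)) _ (ih fun C hC => h C (mem_insert_of_mem B hC))

lemma iInter_inter_mem {ι : Type*} [Finite ι] (hF : IsFilterOn F Z) {B : ι → Set α}
    (h : ∀ i, B i ∩ Z ∈ F) : (⋂ i, B i) ∩ Z ∈ F := by
  rw [← sInter_range]
  exact hF.sInter_inter_mem (finite_range B) (forall_mem_range.2 h)

end IsFilterOn

lemma IsUltraOn.diff_mem_of_inter_notMem {α : Type u} {F : Set (Set α)} {Z X : Set α}
    (hF : IsUltraOn F Z) (hX : X ∩ Z ∉ F) : Z \ X ∈ F := by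
  simpa [hX, sdiff_inter_self_eq_sdiff] using hF.2 (X ∩ Z) inter_subset_right

section Fult

variable {lam : Cardinal.{0}} {t : LocalFilter}

lemma isUltraOn_of_mem_Fult (ht : t ∈ Fult lam) : IsUltraOn t.F t.Z := ht.2.2.2.2.2.1

lemma isFilterOn_of_mem_Fult (ht : t ∈ Fult lam) : IsFilterOn t.F t.Z :=
  (isUltraOn_of_mem_Fult ht).1

lemma a_le_of_mem_Fult (ht : t ∈ Fult lam) {x : Ordinal.{0}} (hx : x ∈ t.Z) : t.a ≤ x :=
  (ht.2.2.1 hx).1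

lemma mk_Z_lt_of_mem_Fult (ht : t ∈ Fult lam) : #t.Z < Cardinal.lift.{1} lam := ht.2.2.2.2.1

lemma subset_Iio_of_mem_Fult (ht : t ∈ Fult lam) : t.Z ⊆ Iio lam.ord :=
  fun _ hx => (ht.2.2.1 hx).2

end Fult

section Regular

variable {lam : Cardinal.{0}}

lemma exists_lt_of_mk_lt (hreg : lam.IsRegular) {S : Set Ordinal.{0}} (hS : S ⊆ Iio lam.ord)
    (hc : #S < Cardinal.lift.{1} lam) : ∃ β < lam.ord, ∀ x ∈ S, x < β := by
  have hcof : #S < (Ordinal.lift.{1} lam.ord).cof := by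
    rwa [← Ordinal.lift_cof, hreg.cof_ord]
  have hbdd : BddAbove S := ⟨lam.ord, fun x hx => (hS hx).le⟩
  refine ⟨Order.succ (sSup S), ?_, fun x hx => Order.lt_succ_of_le (le_csSup hbdd hx)⟩
  exact (Cardinal.isSuccLimit_ord hreg.aleph0_le).succ_lt (Ordinal.sSup_lt_of_lt_cof hcof hS)

lemma exists_le_mem_of_lift_le_mk {S : Set Ordinal.{0}} (hc : Cardinal.lift.{1} lam ≤ #S)
    {β : Ordinal.{0}} (hβ : β < lam.ord) : ∃ α ∈ S, β ≤ α := by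
  by_contra! h
  have := hc.trans (mk_le_mk_of_subset (show S ⊆ Iio β from h))
  rw [Cardinal.mk_Iio_ordinal, Cardinal.lift_le] at this
  exact this.not_gt (Cardinal.lt_ord.1 hβ)

lemma mk_setOf_a_lt_lt (hreg : lam.IsRegular) {r : Set LocalFilter}
    (hlev : ∀ ξ : Ordinal.{0}, #{t | t ∈ r ∧ t.a = ξ} < Cardinal.lift.{1} lam)
    {ε : Ordinal.{0}} (hε : ε < lam.ord) :
    #{t | t ∈ r ∧ t.a < ε} < Cardinal.lift.{1} lam := by
  have hsub : {t | t ∈ r ∧ t.a < ε} ⊆ ⋃ ξ : Iio ε, {t | t ∈ r ∧ t.a = ξ} :=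
    fun t ht => mem_iUnion.2 ⟨⟨t.a, ht.2⟩, ht.1, rfl⟩
  refine (mk_le_mk_of_subset hsub).trans_lt ?_
  rw [card_iUnion_lt_iff_forall_of_isRegular hreg.lift]
  · exact fun ξ => hlev ξ
  · rw [Cardinal.mk_Iio_ordinal, Cardinal.lift_lt]
    exact Cardinal.lt_ord.1 hε

end Regular

section Linked

variable {lam : Cardinal.{0}}

lemma fil_subset_fil_sigmaP (hreg : lam.IsRegular) {p : Set LocalFilter}
    (hp : p ∈ Qstar lam (Fult lam)) : fil lam p ⊆ fil lam (SigmaP lam p) := by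
  rintro A ⟨hA, ε, hε, hAp⟩
  set U := ⋃ s ∈ {s | s ∈ p ∧ s.a < ε}, s.Z
  have hUsub : U ⊆ Iio lam.ord := iUnion₂_subset fun s hs => subset_Iio_of_mem_Fult (hp.1 hs.1)
  have hUcard : #U < Cardinal.lift.{1} lam :=
    (card_biUnion_lt_iff_forall_of_isRegular hreg.lift (mk_setOf_a_lt_lt hreg hp.2.2 hε)).2
      fun s hs => mk_Z_lt_of_mem_Fult (hp.1 hs.1)
  obtain ⟨β, hβ, hUβ⟩ := exists_lt_of_mk_lt hreg hUsub hUcard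
  refine ⟨hA, β, hβ, fun t ht hβt => ?_⟩
  by_contra hAt
  obtain ⟨s, hs, hsF⟩ := ht.2 _ ((isUltraOn_of_mem_Fult ht.1).diff_mem_of_inter_notMem hAt)
  have hsFil := isFilterOn_of_mem_Fult (hp.1 hs)
  have hεs : ε ≤ s.a := by
    obtain ⟨x, ⟨hxt, -⟩, hxs⟩ := hsFil.nonempty_of_mem hsF
    by_contra! hsε
    exact (hUβ x (mem_biUnion ⟨hs, hsε⟩ hxs)).not_ge (hβt.trans (a_le_of_mem_Fult ht.1 hxt))
  obtain ⟨x, ⟨⟨-, hxA⟩, -⟩, hxA', -⟩ := hsFil.inter_nonempty hsF (hAp s hs hεs)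
  exact hxA hxA'

lemma iInter_nonempty_of_mem_fil (hreg : lam.IsRegular) {H : Set (Set LocalFilter)}
    (hH : H ⊆ Qstar lam (Fult lam)) (hlin : Linked lam H) {ι : Type*} [Finite ι] [Nonempty ι]
    {p : ι → Set LocalFilter} (hp : ∀ i, p i ∈ H) {A : ι → Set Ordinal.{0}}
    (hA : ∀ i, A i ∈ fil lam (p i)) : (⋂ i, A i).Nonempty := by
  choose β hβlt hβ using fun i => (fil_subset_fil_sigmaP hreg (hH (hp i)) (hA i)).2
  obtain ⟨i₀, hi₀⟩ := Finite.exists_max β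
  have hcard := hlin.2 (range p) (range_subset_iff.2 hp) (finite_range p) (range_nonempty p)
  obtain ⟨_, ⟨t, rfl, ht⟩, hle⟩ := exists_le_mem_of_lift_le_mk hcard.ge (hβlt i₀)
  have htF := isFilterOn_of_mem_Fult (ht _ ⟨i₀, rfl⟩).1
  have hmem : (⋂ i, A i) ∩ t.Z ∈ t.F :=
    htF.iInter_inter_mem fun i => hβ i t (ht _ ⟨i, rfl⟩) ((hi₀ i).trans hle)
  exact (htF.nonempty_of_mem hmem).mono inter_subset_left

lemma mem_fil_of_forall_inter_mem (hreg : lam.IsRegular) {q : Set LocalFilter}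
    {A : Set Ordinal.{0}} (hA : A ⊆ Iio lam.ord) (h : ∀ s ∈ q, A ∩ s.Z ∈ s.F) :
    A ∈ fil lam q :=
  ⟨hA, 0, hreg.ord_pos, fun s hs _ => h s hs⟩

lemma mem_filH_or_diff_mem_filH (hreg : lam.IsRegular) {H : Set (Set LocalFilter)}
    (hH : H ⊆ Qstar lam (Fult lam)) (hbig : Big lam H) {A : Set Ordinal.{0}}
    (hA : A ⊆ Iio lam.ord) : A ∈ filH lam H ∨ Iio lam.ord \ A ∈ filH lam H := by
  obtain ⟨q, hq, hqA | hqA⟩ := hbig.2 {t | t ∈ Fult lam ∧ A ∩ t.Z ∈ t.F} fun t ht => ht.1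
  · exact Or.inl ⟨q, hq, mem_fil_of_forall_inter_mem hreg hA fun s hs => (hqA hs).2⟩
  · refine Or.inr ⟨q, hq, mem_fil_of_forall_inter_mem hreg sdiff_subset fun s hs => ?_⟩
    have hs' := (hH hq).1 hs
    have hsA : A ∩ s.Z ∉ s.F := fun h => hqA.subset ⟨hs, hs', h⟩
    refine (isFilterOn_of_mem_Fult hs').2.2.1 _
      ((isUltraOn_of_mem_Fult hs').diff_mem_of_inter_notMem hsA) _ ?_ inter_subset_right
    exact fun x hx => ⟨⟨subset_Iio_of_mem_Fult hs' hx.1, hx.2⟩, hx.1⟩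

lemma isFilterOn_filH (hreg : lam.IsRegular) {H : Set (Set LocalFilter)}
    (hH : H ⊆ Qstar lam (Fult lam)) (hlin : Linked lam H) (hbig : Big lam H) :
    IsFilterOn (filH lam H) (Iio lam.ord) := by
  refine ⟨fun A ⟨_, _, hA, _⟩ => hA, ?_, ?_, ?_, ?_⟩
  · obtain ⟨r, hr⟩ := hbig.1
    refine ⟨r, hr, mem_fil_of_forall_inter_mem hreg subset_rfl fun s hs => ?_⟩
    have hs' := (hH hr).1 hs
    rw [inter_eq_right.2 (subset_Iio_of_mem_Fult hs')]
    exact (isFilterOn_of_mem_Fult hs').2.1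
  · rintro A ⟨r, hr, -, ε, hε, hAr⟩ B hAB hB
    refine ⟨r, hr, hB, ε, hε, fun s hs hεs => ?_⟩
    exact (isFilterOn_of_mem_Fult ((hH hr).1 hs)).2.2.1 _ (hAr s hs hεs) _
      (inter_subset_inter_left _ hAB) inter_subset_right
  · rintro A ⟨p, hp, hA⟩ B ⟨p', hp', hB⟩
    refine (mem_filH_or_diff_mem_filH hreg hH hbig
      (inter_subset_left.trans hA.1)).resolve_right ?_
    rintro ⟨q, hq, hC⟩
    obtain ⟨x, hx⟩ := iInter_nonempty_of_mem_fil hreg hH hlin (p := ![p, p', q])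
      (A := ![A, B, Iio lam.ord \ (A ∩ B)]) (by simp [Fin.forall_fin_succ, *])
      (by simp [Fin.forall_fin_succ, *])
    have hx := mem_iInter.1 hx
    exact (hx 2).2 ⟨hx 0, hx 1⟩
  · rintro ⟨r, hr, h⟩
    obtain ⟨x, hx⟩ :=
      iInter_nonempty_of_mem_fil hreg hH hlin (ι := Unit) (fun _ => hr) fun _ => h
    simp at hx

end Linked

theorem stmt16_general (lam : Cardinal.{0}) (hreg : lam.IsRegular)
    (H : Set (Set LocalFilter)) (hH : H ⊆ Qstar lam (Fult lam))
    (hlin : Linked lam H) (hbig : Big lam H) :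
    IsUltraOn (filH lam H) (Set.Iio lam.ord) :=
  ⟨isFilterOn_filH hreg hH hlin hbig, fun _ hA => mem_filH_or_diff_mem_filH hreg hH hbig hA⟩

/-- Observation 2.8(2): if `H` is linked and big then `fil(H)` is an ultrafilter. -/
theorem stmt16 (lam : Cardinal.{0}) (hreg : lam.IsRegular) (hunc : ℵ₀ < lam)
    (H : Set (Set LocalFilter)) (hH : H ⊆ Qstar lam (Fult lam))
    (hlin : Linked lam H) (hbig : Big lam H) :
    IsUltraOn (filH lam H) (Set.Iio lam.ord) :=
  stmt16_general lam hreg H hH hlin hbig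

end

end RS889
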